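/- arXiv:2405.01424 — 3 statements merged into one kernel-verified Lean document; each statement's English description precedes it below -/
import Mathlib

section
/- Let π be a Nash equilibrium with equilibrium density f, and for each j let E_j = argmin_{y ∈ ℝ} J(x_j, y, f). Then for every j, E_j = {y ∈ ℝ : (x_j, y) belongs to the support of π}, and ∫_{E_j} f(y) dy = a_j. -/
/-!
A point strictly between two minimizers of `J(x₀, ·, f)` has positive density: there the
parabola `(x₀ - ·)²` lies strictly below its value at one of the endpoints, and `f` must make up
the difference. As the only mixed term of `J` is `-2xy`, minimizers are monotone in `x`, so the
sets `E_j` overlap in at most one point, which `f dy` does not charge. Splitting the second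
marginal along the atoms `x_k` of the first one, the slice of `π` over `x_j` therefore coincides
with `f dy` on subsets of `E_j`, and has mass `a_j`; this gives `∫_{E_j} f = a_j`. The density
vanishes on the open null set outside `⋃ₖ E_k`, which with the first remark makes each `E_j` a
nondegenerate interval; every point of it is then approached by open subintervals of positive
`f`-mass carried by the slice over `x_j`. Conversely, `π` is carried by the closed graph of the
argmin correspondence, which therefore contains its support.
-/

open MeasureTheory Set

/-- The cost `J(x, y, f) = (x - y)^2 + f(y)`. -/
noncomputable def Jcost (f : ℝ → ℝ) (x y : ℝ) : ℝ := (x - y) ^ 2 + f y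

/-- The support of a measure `π` on `ℝ × ℝ`: points all of whose open
neighborhoods have positive measure. -/
def msupport (π : Measure (ℝ × ℝ)) : Set (ℝ × ℝ) :=
  {p | ∀ U : Set (ℝ × ℝ), IsOpen U → p ∈ U → 0 < π U}

/-- `π` is a Nash equilibrium with equilibrium density `f` for the initial
measure `m = ∑ j, a_j δ_{x_j}`:
`π` is a Borel probability measure on `ℝ × ℝ`, `f` is continuous, nonnegative,
with total integral 1; the first marginal of `π` is `m`; the second marginal of
`π` has density `f` with respect to Lebesgue measure; and for `π`-a.e. `(x, y)`,
`y` minimizes `J(x, ·, f)`. -/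
def IsNash (n : ℕ) (x a : Fin n → ℝ) (π : Measure (ℝ × ℝ)) (f : ℝ → ℝ) : Prop :=
  IsProbabilityMeasure π ∧
  Continuous f ∧ (∀ y, 0 ≤ f y) ∧ (∫ y, f y) = 1 ∧
  π.map Prod.fst = ∑ j : Fin n, ENNReal.ofReal (a j) • Measure.dirac (x j) ∧
  π.map Prod.snd = volume.withDensity (fun y => ENNReal.ofReal (f y)) ∧
  (∀ᵐ p ∂π, ∀ z : ℝ, Jcost f p.1 p.2 ≤ Jcost f p.1 z)

open Function

open scoped ENNReal

section Slices

variable {α β ι : Type*} [MeasurableSpace α] [MeasurableSpace β] [MeasurableSingletonClass α]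
  [Fintype ι] {π : Measure (α × β)} {x : ι → α}

lemma measure_compl_range_prod_univ {c : ι → ℝ≥0∞}
    (hπ : π.map Prod.fst = ∑ k, c k • Measure.dirac (x k)) :
    π ((range x)ᶜ ×ˢ univ) = 0 := by
  have hmeas : MeasurableSet (range x)ᶜ := (finite_range x).measurableSet.compl
  rw [prod_univ, ← Measure.map_apply measurable_fst hmeas, hπ, Measure.finsetSum_apply]
  refine Finset.sum_eq_zero fun k _ => ?_
  simp [Measure.dirac_apply' _ hmeas]

lemma measure_singleton_prod_univ (hx : Injective x) {c : ι → ℝ≥0∞}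
    (hπ : π.map Prod.fst = ∑ k, c k • Measure.dirac (x k)) (j : ι) :
    π ({x j} ×ˢ univ) = c j := by
  rw [prod_univ, ← Measure.map_apply measurable_fst (measurableSet_singleton _), hπ,
    Measure.finsetSum_apply, Finset.sum_eq_single j]
  · simp
  · intro k _ hkj
    simp [hx.ne hkj]
  · simp

lemma map_snd_apply_eq_sum (hx : Injective x) (hπ : π ((range x)ᶜ ×ˢ univ) = 0)
    {B : Set β} (hB : MeasurableSet B) : π.map Prod.snd B = ∑ k, π ({x k} ×ˢ B) := by
  have hconull : π (range x ×ˢ univ)ᶜ = 0 := by rwa [prod_univ, ← preimage_compl, ← prod_univ]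
  have hdisj : Pairwise (Disjoint on fun k => ({x k} ×ˢ B : Set (α × β))) :=
    fun k l hkl => disjoint_prod.mpr (Or.inl (disjoint_singleton.mpr (hx.ne hkl)))
  rw [Measure.map_apply measurable_snd hB, ← univ_prod, ← measure_inter_conull hconull,
    prod_inter_prod, univ_inter, inter_univ, ← iUnion_singleton_eq_range, iUnion_prod_const,
    measure_iUnion hdisj fun k => (measurableSet_singleton _).prod hB, tsum_fintype]

lemma measure_singleton_prod_eq_map_snd (hx : Injective x)
    (hπ : π ((range x)ᶜ ×ˢ univ) = 0) {E : ι → Set β} (hE : ∀ k, π ({x k} ×ˢ (E k)ᶜ) = 0)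
    (hdisj : Pairwise fun j k => π.map Prod.snd (E j ∩ E k) = 0) {j : ι} {S : Set β}
    (hS : MeasurableSet S) (hSE : S ⊆ E j) : π ({x j} ×ˢ S) = π.map Prod.snd S := by
  rw [map_snd_apply_eq_sum hx hπ hS, Finset.sum_eq_single j]
  · intro k _ hkj
    have hoverlap : π (Prod.snd ⁻¹' (E j ∩ E k)) = 0 :=
      le_antisymm ((Measure.le_map_apply measurable_snd.aemeasurable _).trans
        (hdisj hkj.symm).le) bot_le
    refine measure_mono_null ?_ (measure_union_null (hE k) hoverlap)
    rintro ⟨p₁, p₂⟩ ⟨hp₁, hp₂⟩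
    by_cases hk : p₂ ∈ E k
    · exact Or.inr ⟨hSE hp₂, hk⟩
    · exact Or.inl ⟨hp₁, hk⟩
  · simp

end Slices

lemma msupport_subset_of_isClosed {π : Measure (ℝ × ℝ)} {C : Set (ℝ × ℝ)} (hC : IsClosed C)
    (hπ : π Cᶜ = 0) : msupport π ⊆ C :=
  fun _ hp => by_contra fun hpC => (hp _ hC.isOpen_compl hpC).ne' hπ

lemma withDensity_ofReal_pos_of_isOpen {X : Type*} [TopologicalSpace X] [MeasurableSpace X]
    [OpensMeasurableSpace X] (μ : Measure X) [μ.IsOpenPosMeasure] {f : X → ℝ}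
    (hf : Continuous f) {U : Set X} (hU : IsOpen U) {w : X} (hwU : w ∈ U) (hw : 0 < f w) :
    0 < μ.withDensity (fun y => ENNReal.ofReal (f y)) U := by
  have hsupp : Function.support (fun y => ENNReal.ofReal (f y)) = {y | 0 < f y} := by
    ext y
    simp
  rw [withDensity_apply _ hU.measurableSet, setLIntegral_pos_iff hf.measurable.ennreal_ofReal,
    hsupp]
  exact ((isOpen_lt continuous_const hf).inter hU).measure_pos μ ⟨w, hw, hwU⟩

lemma Set.OrdConnected.exists_Icc_subset_inter_ball {s : Set ℝ} (hs : s.OrdConnected)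
    (hnt : s.Nontrivial) {y : ℝ} (hy : y ∈ s) {ε : ℝ} (hε : 0 < ε) :
    ∃ a b, a < b ∧ Icc a b ⊆ s ∩ Metric.ball y ε := by
  obtain ⟨z, hz, hzy⟩ := hnt.exists_ne y
  have hyz : min y z < max y z := min_lt_max.mpr hzy.symm
  refine ⟨max (min y z) (y - ε / 2), min (max y z) (y + ε / 2), ?_, fun w hw => ⟨?_, ?_⟩⟩
  · simp only [max_lt_iff, lt_min_iff]
    refine ⟨⟨hyz, ?_⟩, ?_, ?_⟩ <;> linarith [min_le_left y z, le_max_left y z]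
  · exact hs.uIcc_subset hy hz ⟨le_of_max_le_left hw.1, le_of_le_min_left hw.2⟩
  · rw [Real.ball_eq_Ioo]
    constructor <;> linarith [le_max_right (min y z) (y - ε / 2), hw.1, hw.2,
      min_le_right (max y z) (y + ε / 2)]

section Minimizers

variable {f : ℝ → ℝ}

/-- `minimizers f (x j)` is the set `E_j`. -/
def minimizers (f : ℝ → ℝ) (x₀ : ℝ) : Set ℝ := {y | ∀ z, Jcost f x₀ y ≤ Jcost f x₀ z}

lemma isClosed_setOf_mem_minimizers (hf : Continuous f) :
    IsClosed {p : ℝ × ℝ | p.2 ∈ minimizers f p.1} := by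
  have hset : {p : ℝ × ℝ | p.2 ∈ minimizers f p.1} =
      ⋂ z, {p : ℝ × ℝ | Jcost f p.1 p.2 ≤ Jcost f p.1 z} :=
    ofPred_forall fun z (p : ℝ × ℝ) => Jcost f p.1 p.2 ≤ Jcost f p.1 z
  rw [hset]
  exact isClosed_iInter fun z =>
    isClosed_le (by unfold Jcost; fun_prop) (by unfold Jcost; fun_prop)

lemma isClosed_minimizers (hf : Continuous f) (x₀ : ℝ) : IsClosed (minimizers f x₀) :=
  (isClosed_setOf_mem_minimizers hf).preimage (Continuous.prodMk_right x₀)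

lemma le_of_mem_minimizers_of_lt {x₁ x₂ u v : ℝ} (hx : x₁ < x₂) (hu : u ∈ minimizers f x₁)
    (hv : v ∈ minimizers f x₂) : u ≤ v := by
  by_contra! hvu
  have h₁ := hu v
  have h₂ := hv u
  simp only [Jcost] at h₁ h₂
  -- adding the two minimality inequalities leaves `2 (x₂ - x₁) (u - v) ≤ 0`
  nlinarith [mul_pos (sub_pos.mpr hx) (sub_pos.mpr hvu)]

lemma subsingleton_minimizers_inter {x₁ x₂ : ℝ} (hx : x₁ ≠ x₂) :
    (minimizers f x₁ ∩ minimizers f x₂).Subsingleton := by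
  rintro u ⟨hu₁, hu₂⟩ v ⟨hv₁, hv₂⟩
  rcases hx.lt_or_gt with hx | hx
  · exact le_antisymm (le_of_mem_minimizers_of_lt hx hu₁ hv₂)
      (le_of_mem_minimizers_of_lt hx hv₁ hu₂)
  · exact le_antisymm (le_of_mem_minimizers_of_lt hx hu₂ hv₁)
      (le_of_mem_minimizers_of_lt hx hv₂ hu₁)

lemma pos_of_mem_minimizers_of_lt_of_lt (hf0 : ∀ y, 0 ≤ f y) {x₀ s t w : ℝ}
    (hs : s ∈ minimizers f x₀) (ht : t ∈ minimizers f x₀) (hsw : s < w) (hwt : w < t) :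
    0 < f w := by
  have h₁ := hs w
  have h₂ := ht w
  simp only [Jcost] at h₁ h₂
  -- `(x₀ - w)² < max ((x₀ - s)², (x₀ - t)²) ≤ J(x₀, w, f) = (x₀ - w)² + f w`
  rcases le_or_gt x₀ w with hw | hw
  · nlinarith [hf0 t]
  · nlinarith [hf0 s]

end Minimizers

namespace IsNash

variable {n : ℕ} {x a : Fin n → ℝ} {π : Measure (ℝ × ℝ)} {f : ℝ → ℝ}

lemma measure_compl_setOf_mem_minimizers (h : IsNash n x a π f) :
    π {p : ℝ × ℝ | p.2 ∈ minimizers f p.1}ᶜ = 0 := by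
  obtain ⟨-, -, -, -, -, -, hae⟩ := h
  exact ae_iff.mp hae

lemma measure_singleton_prod_compl_minimizers (h : IsNash n x a π f) (x₀ : ℝ) :
    π ({x₀} ×ˢ (minimizers f x₀)ᶜ) = 0 := by
  refine measure_mono_null ?_ h.measure_compl_setOf_mem_minimizers
  rintro ⟨p₁, p₂⟩ ⟨rfl, hp⟩
  exact hp

lemma measure_singleton_prod_eq_map_snd_of_subset (h : IsNash n x a π f) (hx : StrictMono x)
    (j : Fin n) {S : Set ℝ} (hS : MeasurableSet S) (hSE : S ⊆ minimizers f (x j)) :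
    π ({x j} ×ˢ S) = π.map Prod.snd S := by
  have ⟨_, _, _, _, hfst, hsnd, _⟩ := h
  refine measure_singleton_prod_eq_map_snd hx.injective (measure_compl_range_prod_univ hfst)
    (fun k => h.measure_singleton_prod_compl_minimizers (x k)) (fun j k hjk => ?_) hS hSE
  rw [hsnd]
  exact withDensity_absolutelyContinuous _ _
    ((subsingleton_minimizers_inter (hx.injective.ne hjk)).measure_zero volume)

lemma map_snd_minimizers (h : IsNash n x a π f) (hx : StrictMono x) (j : Fin n) :
    π.map Prod.snd (minimizers f (x j)) = ENNReal.ofReal (a j) := by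
  have ⟨_, hfc, _, _, hfst, _, _⟩ := h
  have hE := (isClosed_minimizers hfc (x j)).measurableSet
  rw [← h.measure_singleton_prod_eq_map_snd_of_subset hx j hE subset_rfl,
    ← measure_singleton_prod_univ hx.injective hfst j]
  have hinter : {x j} ×ˢ univ ∩ {x j} ×ˢ minimizers f (x j) = {x j} ×ˢ minimizers f (x j) :=
    inter_eq_right.mpr (prod_mono subset_rfl (subset_univ _))
  rw [← hinter, measure_inter_conull']
  refine measure_mono_null ?_ (h.measure_singleton_prod_compl_minimizers (x j))
  rintro ⟨p₁, p₂⟩ ⟨⟨hp₁, -⟩, hp⟩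
  exact ⟨hp₁, fun hp₂ => hp ⟨hp₁, hp₂⟩⟩

lemma eq_zero_of_notMem_iUnion_minimizers (h : IsNash n x a π f) (hx : Injective x)
    {w : ℝ} (hw : w ∉ ⋃ k, minimizers f (x k)) : f w = 0 := by
  have ⟨_, hfc, hf0, _, hfst, hsnd, _⟩ := h
  have hopen : IsOpen (⋃ k, minimizers f (x k))ᶜ :=
    (isClosed_iUnion_of_finite fun k => isClosed_minimizers hfc (x k)).isOpen_compl
  by_contra hfw
  have hpos := withDensity_ofReal_pos_of_isOpen volume hfc hopen hw ((hf0 w).lt_of_ne' hfw)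
  rw [← hsnd, map_snd_apply_eq_sum hx (measure_compl_range_prod_univ hfst) hopen.measurableSet,
    Finset.sum_pos_iff] at hpos
  obtain ⟨k, -, hk⟩ := hpos
  refine hk.ne' (measure_mono_null ?_ (h.measure_singleton_prod_compl_minimizers (x k)))
  exact prod_mono subset_rfl
    (compl_subset_compl.mpr (subset_iUnion (fun k => minimizers f (x k)) k))

lemma ordConnected_minimizers (h : IsNash n x a π f) (hx : StrictMono x) (j : Fin n) :
    (minimizers f (x j)).OrdConnected := by
  have ⟨_, _, hf0, _⟩ := h
  refine ⟨fun u hu v hv w hw => ?_⟩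
  rcases hw.1.eq_or_lt with rfl | huw
  · exact hu
  rcases hw.2.eq_or_lt with rfl | hwv
  · exact hv
  -- `f w > 0` puts `w` in some `minimizers f (x k)`, and monotonicity forces `k = j`
  have hfw := pos_of_mem_minimizers_of_lt_of_lt hf0 hu hv huw hwv
  obtain ⟨k, hk⟩ := mem_iUnion.mp
    (not_not.mp (mt (h.eq_zero_of_notMem_iUnion_minimizers hx.injective) hfw.ne'))
  rcases lt_trichotomy k j with hkj | rfl | hjk
  · exact absurd (le_of_mem_minimizers_of_lt (hx hkj) hk hu) huw.not_ge
  · exact hk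
  · exact absurd (le_of_mem_minimizers_of_lt (hx hjk) hv hk) hwv.not_ge

lemma nontrivial_minimizers (h : IsNash n x a π f) (hx : StrictMono x) {j : Fin n}
    (ha : 0 < a j) : (minimizers f (x j)).Nontrivial := by
  by_contra hnt
  have hmass := h.map_snd_minimizers hx j
  obtain ⟨-, -, -, -, -, hsnd, -⟩ := h
  rw [hsnd, withDensity_absolutelyContinuous _ _
    ((not_nontrivial_iff.mp hnt).measure_zero volume), eq_comm, ENNReal.ofReal_eq_zero]
    at hmass
  exact hmass.not_gt ha

lemma mem_msupport_of_mem_minimizers (h : IsNash n x a π f) (hx : StrictMono x) {j : Fin n}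
    (ha : 0 < a j) {y : ℝ} (hy : y ∈ minimizers f (x j)) : (x j, y) ∈ msupport π := by
  have ⟨_, hfc, hf0, _, _, hsnd, _⟩ := h
  intro U hU hyU
  obtain ⟨ε, hε, hball⟩ := Metric.isOpen_iff.mp hU _ hyU
  obtain ⟨s, t, hst, hsub⟩ := (h.ordConnected_minimizers hx j).exists_Icc_subset_inter_ball
    (h.nontrivial_minimizers hx ha) hy hε
  have hE : Icc s t ⊆ minimizers f (x j) := fun w hw => (hsub hw).1
  have hfw : 0 < f ((s + t) / 2) := pos_of_mem_minimizers_of_lt_of_lt hf0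
    (hE (left_mem_Icc.mpr hst.le)) (hE (right_mem_Icc.mpr hst.le)) (by linarith) (by linarith)
  have hUsub : {x j} ×ˢ Ioo s t ⊆ U :=
    (prod_mono (singleton_subset_iff.mpr (Metric.mem_ball_self hε))
      fun w hw => (hsub (Ioo_subset_Icc_self hw)).2).trans
      ((ball_prod_same _ _ _).subset.trans hball)
  calc (0 : ℝ≥0∞) < π.map Prod.snd (Ioo s t) := by
        rw [hsnd]
        exact withDensity_ofReal_pos_of_isOpen volume hfc isOpen_Ioo
          ⟨by linarith, by linarith⟩ hfw
    _ = π ({x j} ×ˢ Ioo s t) := (h.measure_singleton_prod_eq_map_snd_of_subset hx j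
        measurableSet_Ioo (Ioo_subset_Icc_self.trans hE)).symm
    _ ≤ π U := measure_mono hUsub

lemma mem_minimizers_of_mem_msupport (h : IsNash n x a π f) {x₀ y : ℝ}
    (hp : (x₀, y) ∈ msupport π) : y ∈ minimizers f x₀ := by
  have ⟨_, hfc, _⟩ := h
  exact msupport_subset_of_isClosed (isClosed_setOf_mem_minimizers hfc)
    h.measure_compl_setOf_mem_minimizers hp

lemma integral_minimizers (h : IsNash n x a π f) (hx : StrictMono x) {j : Fin n}
    (ha : 0 < a j) : ∫ y in minimizers f (x j), f y = a j := by
  have ⟨_, hfc, hf0, _, _, hsnd, _⟩ := h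
  rw [integral_eq_lintegral_of_nonneg_ae (Filter.Eventually.of_forall hf0)
      hfc.aestronglyMeasurable.restrict,
    ← withDensity_apply _ (isClosed_minimizers hfc _).measurableSet, ← hsnd,
    h.map_snd_minimizers hx j, ENNReal.toReal_ofReal ha.le]

end IsNash

theorem stmt_4_general (n : ℕ) (x : Fin n → ℝ) (hx : StrictMono x)
    (a : Fin n → ℝ) (ha : ∀ j, 0 < a j)
    (π : Measure (ℝ × ℝ)) (f : ℝ → ℝ) (hNash : IsNash n x a π f) :
    ∀ j : Fin n,
      {y : ℝ | ∀ z : ℝ, Jcost f (x j) y ≤ Jcost f (x j) z} =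
        {y : ℝ | (x j, y) ∈ msupport π} ∧
      (∫ y in {y : ℝ | ∀ z : ℝ, Jcost f (x j) y ≤ Jcost f (x j) z}, f y) = a j := by
  intro j
  show minimizers f (x j) = _ ∧ ∫ y in minimizers f (x j), f y = a j
  exact ⟨ext fun y => ⟨hNash.mem_msupport_of_mem_minimizers hx (ha j),
      hNash.mem_minimizers_of_mem_msupport⟩,
    hNash.integral_minimizers hx (ha j)⟩

/-- With `E_j = argmin_y J(x_j, y, f)`: `E_j = {y : (x_j, y) ∈ supp π}` and
`∫_{E_j} f = a_j` for every `j`. -/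
theorem stmt_4 (n : ℕ) (hn : 1 ≤ n) (x : Fin n → ℝ) (hx : StrictMono x)
    (a : Fin n → ℝ) (ha : ∀ j, 0 < a j) (hsum : ∑ j, a j = 1)
    (π : Measure (ℝ × ℝ)) (f : ℝ → ℝ) (hNash : IsNash n x a π f) :
    ∀ j : Fin n,
      {y : ℝ | ∀ z : ℝ, Jcost f (x j) y ≤ Jcost f (x j) z} =
        {y : ℝ | (x j, y) ∈ msupport π} ∧
      (∫ y in {y : ℝ | ∀ z : ℝ, Jcost f (x j) y ≤ Jcost f (x j) z}, f y) = a j :=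
  stmt_4_general n x hx a ha π f hNash
end

section
/- Let C ∈ 𝔾 and write E_j^{(C)} = [α_j, β_j]. Then α_j < β_j for all j, and β_{j−1} ≤ α_j for all j = 2, …, n; moreover, for j = 2, …, n, β_{j−1} = α_j if and only if f_j^{(C)}(γ_{(j−1)j}(C)) ≥ 0. -/
/-!
The difference `f_i - f_j` is affine with slope `2 (x_i - x_j)` and vanishes at `γ_{ij}`, so for
`x_i < x_j` the set `E_i` lies left of `γ_{ij}` and `E_j` lies right of it; this gives
`β_{j-1} ≤ γ_{(j-1)j} ≤ α_j`. The same affine comparison, started from `β_{j-1} ∈ E_{j-1}` and from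
`α_j ∈ E_j`, shows that at `γ_{(j-1)j}` every `f_k` is dominated by `f_{j-1} = f_j`; hence
`γ_{(j-1)j}` lies in both `E_{j-1}` and `E_j` exactly when `f_j(γ_{(j-1)j}) ≥ 0`.
Finally `α_j < β_j` because `F_j(C) > 0` rules out an empty or one-point `E_j`.
-/

open MeasureTheory Set
open scoped Classical

/-- `f_j^{(C)}(t) = C_j - (t - x_j)^2`. -/
noncomputable def fj (n : ℕ) (x C : Fin n → ℝ) (j : Fin n) (t : ℝ) : ℝ :=
  C j - (t - x j) ^ 2

/-- `f^{(C)}(t) = max{f_1^{(C)}(t), …, f_n^{(C)}(t), 0}`. -/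
noncomputable def fmax (n : ℕ) (x C : Fin n → ℝ) (t : ℝ) : ℝ :=
  max (⨆ j : Fin n, fj n x C j t) 0

/-- `E_j^{(C)} = {t : f_j^{(C)}(t) = f^{(C)}(t)}`. -/
def Ej (n : ℕ) (x C : Fin n → ℝ) (j : Fin n) : Set ℝ :=
  {t | fj n x C j t = fmax n x C t}

/-- `F_j(C) = ∫_{E_j^{(C)}} f^{(C)}` if `E_j^{(C)} ≠ ∅`, else `0`. -/
noncomputable def Fj (n : ℕ) (x C : Fin n → ℝ) (j : Fin n) : ℝ :=
  if (Ej n x C j).Nonempty then ∫ t in Ej n x C j, fmax n x C t else 0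

/-- `F(C) = (F_1(C), …, F_n(C))`. -/
noncomputable def Fvec (n : ℕ) (x C : Fin n → ℝ) : Fin n → ℝ :=
  fun j => Fj n x C j

/-- `𝔾 = {C : F_j(C) > 0 for all j}`. -/
def Gset (n : ℕ) (x : Fin n → ℝ) : Set (Fin n → ℝ) :=
  {C | ∀ j, 0 < Fj n x C j}

/-- `γ_{ij}(C) = (C_i - C_j)/(2(x_j - x_i)) + (x_i + x_j)/2`. -/
noncomputable def gam (n : ℕ) (x C : Fin n → ℝ) (i j : Fin n) : ℝ :=
  (C i - C j) / (2 * (x j - x i)) + (x i + x j) / 2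

section Parabolas

variable {n : ℕ} {x C : Fin n → ℝ} {i j k : Fin n} {s t : ℝ}

lemma fj_sub_fj (i k : Fin n) (s t : ℝ) :
    fj n x C k t - fj n x C i t = fj n x C k s - fj n x C i s + 2 * (x k - x i) * (t - s) := by
  simp only [fj]; ring

lemma fj_gam_eq (h : x i ≠ x j) : fj n x C i (gam n x C i j) = fj n x C j (gam n x C i j) := by
  have h' : x j - x i ≠ 0 := sub_ne_zero.mpr h.symm
  simp only [fj, gam]
  field_simp
  ring

lemma fj_sub_fj_eq_mul_sub_gam (h : x i ≠ x j) (t : ℝ) :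
    fj n x C i t - fj n x C j t = 2 * (x i - x j) * (t - gam n x C i j) := by
  rw [fj_sub_fj j i (gam n x C i j) t, fj_gam_eq h, sub_self, zero_add]

lemma fj_le_fmax (k : Fin n) (t : ℝ) : fj n x C k t ≤ fmax n x C t :=
  (le_ciSup (f := fun j => fj n x C j t) (finite_range _).bddAbove k).trans (le_max_left _ _)

lemma fj_le_of_mem_Ej (ht : t ∈ Ej n x C j) (k : Fin n) : fj n x C k t ≤ fj n x C j t :=
  ht ▸ fj_le_fmax k t

lemma fj_nonneg_of_mem_Ej (ht : t ∈ Ej n x C j) : 0 ≤ fj n x C j t :=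
  ht ▸ le_max_right _ _

lemma mem_Ej_of_forall_fj_le (h0 : 0 ≤ fj n x C j t) (h : ∀ k, fj n x C k t ≤ fj n x C j t) :
    t ∈ Ej n x C j := by
  have : Nonempty (Fin n) := ⟨j⟩
  have hsup : (⨆ k, fj n x C k t) = fj n x C j t :=
    le_antisymm (ciSup_le h) (le_ciSup (f := fun k => fj n x C k t) (finite_range _).bddAbove j)
  show fj n x C j t = max (⨆ k, fj n x C k t) 0
  rw [hsup, max_eq_left h0]

lemma fj_le_of_mem_Ej_of_le (hs : s ∈ Ej n x C i) (hk : x k ≤ x i) (hst : s ≤ t) :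
    fj n x C k t ≤ fj n x C i t := by
  have := fj_le_of_mem_Ej hs k
  nlinarith [fj_sub_fj (x := x) (C := C) i k s t]

lemma fj_le_of_mem_Ej_of_ge (hs : s ∈ Ej n x C j) (hk : x j ≤ x k) (hts : t ≤ s) :
    fj n x C k t ≤ fj n x C j t := by
  have := fj_le_of_mem_Ej hs k
  nlinarith [fj_sub_fj (x := x) (C := C) j k s t]

lemma le_gam_of_mem_Ej (hij : x i < x j) (hs : s ∈ Ej n x C i) : s ≤ gam n x C i j := by
  have := fj_le_of_mem_Ej hs j
  nlinarith [fj_sub_fj_eq_mul_sub_gam (x := x) (C := C) hij.ne s]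

lemma gam_le_of_mem_Ej (hij : x i < x j) (ht : t ∈ Ej n x C j) : gam n x C i j ≤ t := by
  have := fj_le_of_mem_Ej ht i
  nlinarith [fj_sub_fj_eq_mul_sub_gam (x := x) (C := C) hij.ne t]

lemma gam_mem_Ej_inter_of_adjacent (hij : x i < x j) (hadj : ∀ k, x k ≤ x i ∨ x j ≤ x k)
    (hs : s ∈ Ej n x C i) (ht : t ∈ Ej n x C j) (h0 : 0 ≤ fj n x C j (gam n x C i j)) :
    gam n x C i j ∈ Ej n x C i ∩ Ej n x C j := by
  have hγj : gam n x C i j ∈ Ej n x C j := by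
    refine mem_Ej_of_forall_fj_le h0 fun k => ?_
    rcases hadj k with hk | hk
    · exact fj_gam_eq (x := x) (C := C) hij.ne ▸ fj_le_of_mem_Ej_of_le hs hk (le_gam_of_mem_Ej hij hs)
    · exact fj_le_of_mem_Ej_of_ge ht hk (gam_le_of_mem_Ej hij ht)
  refine ⟨?_, hγj⟩
  show fj n x C i _ = fmax n x C _
  rw [fj_gam_eq hij.ne]
  exact hγj

end Parabolas

section Gset

variable {n : ℕ} {x C : Fin n → ℝ} {j : Fin n} {a b : ℝ}

lemma Ej_nonempty_of_mem_Gset (hC : C ∈ Gset n x) (j : Fin n) : (Ej n x C j).Nonempty := by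
  by_contra h
  have := hC j
  rw [Fj, if_neg h] at this
  exact this.false

lemma lt_of_mem_Gset_of_Ej_eq_Icc (hC : C ∈ Gset n x) (hE : Ej n x C j = Icc a b) : a < b := by
  have hab : a ≤ b := nonempty_Icc.mp (hE ▸ Ej_nonempty_of_mem_Gset hC j)
  refine hab.lt_of_ne fun h => ?_
  have hF := hC j
  have hnull : volume (Ej n x C j) = 0 := by rw [hE, h, Icc_self, Real.volume_singleton]
  rw [Fj, if_pos (Ej_nonempty_of_mem_Gset hC j), setIntegral_measure_zero _ hnull] at hF
  exact hF.false

end Gset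

theorem stmt_8_general (n : ℕ) (x : Fin n → ℝ) (hx : StrictMono x)
    (C : Fin n → ℝ) (hC : C ∈ Gset n x) (α β : Fin n → ℝ)
    (hE : ∀ j, Ej n x C j = Set.Icc (α j) (β j)) :
    (∀ j : Fin n, α j < β j) ∧
    (∀ j : Fin n, ∀ _ : 0 < j.val,
      β ⟨j.val - 1, lt_of_le_of_lt (Nat.sub_le _ _) j.isLt⟩ ≤ α j ∧
      (β ⟨j.val - 1, lt_of_le_of_lt (Nat.sub_le _ _) j.isLt⟩ = α j ↔
        0 ≤ fj n x C j
          (gam n x C ⟨j.val - 1, lt_of_le_of_lt (Nat.sub_le _ _) j.isLt⟩ j))) := by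
  have hαβ (j : Fin n) : α j < β j := lt_of_mem_Gset_of_Ej_eq_Icc hC (hE j)
  have hα (j : Fin n) : α j ∈ Ej n x C j := hE j ▸ left_mem_Icc.2 (hαβ j).le
  have hβ (j : Fin n) : β j ∈ Ej n x C j := hE j ▸ right_mem_Icc.2 (hαβ j).le
  refine ⟨hαβ, fun j hj => ?_⟩
  set i : Fin n := ⟨j.val - 1, lt_of_le_of_lt (Nat.sub_le _ _) j.isLt⟩
  have hij : x i < x j := hx (Fin.lt_def.2 (Nat.sub_lt hj one_pos))
  have hβγ : β i ≤ gam n x C i j := le_gam_of_mem_Ej hij (hβ i)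
  have hγα : gam n x C i j ≤ α j := gam_le_of_mem_Ej hij (hα j)
  refine ⟨hβγ.trans hγα, fun heq => ?_, fun h0 => ?_⟩
  · have hγ : gam n x C i j = α j := hγα.antisymm (heq ▸ hβγ)
    exact hγ ▸ fj_nonneg_of_mem_Ej (hα j)
  · have hadj (k : Fin n) : x k ≤ x i ∨ x j ≤ x k := by
      rcases lt_or_ge k j with hk | hk
      · exact .inl (hx.monotone (Fin.le_def.2 (Nat.le_sub_one_of_lt hk)))
      · exact .inr (hx.monotone hk)
    obtain ⟨hγi, hγj⟩ := gam_mem_Ej_inter_of_adjacent hij hadj (hβ i) (hα j) h0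
    rw [hE] at hγi hγj
    exact le_antisymm (hβγ.trans hγα) (hγj.1.trans hγi.2)

/-- For `C ∈ 𝔾` with `E_j^{(C)} = [α_j, β_j]`: `α_j < β_j` for all `j`,
`β_{j-1} ≤ α_j` for `j = 2, …, n`, and `β_{j-1} = α_j` if and only if
`f_j^{(C)}(γ_{(j-1)j}) ≥ 0`. -/
theorem stmt_8 (n : ℕ) (hn : 1 ≤ n) (x : Fin n → ℝ) (hx : StrictMono x)
    (C : Fin n → ℝ) (hC : C ∈ Gset n x) (α β : Fin n → ℝ)
    (hE : ∀ j, Ej n x C j = Set.Icc (α j) (β j)) :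
    (∀ j : Fin n, α j < β j) ∧
    (∀ j : Fin n, ∀ _ : 0 < j.val,
      β ⟨j.val - 1, lt_of_le_of_lt (Nat.sub_le _ _) j.isLt⟩ ≤ α j ∧
      (β ⟨j.val - 1, lt_of_le_of_lt (Nat.sub_le _ _) j.isLt⟩ = α j ↔
        0 ≤ fj n x C j
          (gam n x C ⟨j.val - 1, lt_of_le_of_lt (Nat.sub_le _ _) j.isLt⟩ j))) :=
  stmt_8_general n x hx C hC α β hE
end

section
/- There exist constants δ ∈ (0,1) and M > 0 such that for every C ∈ ℝ^n and every index j with C_j = max{C_1, …, C_n} and C_j ≥ M, one has F_j(C) ≥ δ C_j. -/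
/-!
Let `r > 0` be at most `1` and at most half of the smallest gap `x_{i+1} - x_i`. On the interval
`[x_j, x_j + r]` the node `x_j` is a nearest node, so when `C_j` is maximal the parabola `f_j` is the
top one there and the interval lies in `E_j`. Hence `F_j(C) ≥ (C_j - r²) r ≥ (r / 2) C_j` once `C_j ≥ 2`.
-/

open MeasureTheory Set
open scoped Classical

open Filter Topology Metric

theorem StrictMono.exists_pos_add_le {ι : Type*} [Finite ι] [Preorder ι] {x : ι → ℝ}
    (hx : StrictMono x) : ∃ ε > 0, ∀ i j, i < j → x i + ε ≤ x j := by
  have : ∀ᶠ ε in 𝓝[>] (0 : ℝ), 0 < ε ∧ ∀ i j, i < j → x i + ε ≤ x j :=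
    eventually_mem_nhdsWithin.and <| eventually_all.2 fun i => eventually_all.2 fun j =>
      eventually_imp_distrib_left.2 fun hij =>
        ((eventually_le_nhds (sub_pos.2 (hx hij))).filter_mono nhdsWithin_le_nhds).mono
          fun ε h => by linarith
  exact this.exists

theorem abs_sub_le_abs_sub_of_mem_Icc {a b r t : ℝ} (ht : t ∈ Icc a (a + r))
    (hb : b ≤ a ∨ a + 2 * r ≤ b) : |t - a| ≤ |t - b| := by
  rw [abs_of_nonneg (sub_nonneg.2 ht.1)]
  rcases hb with hb | hb
  · exact le_abs.2 (Or.inl (by linarith))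
  · exact le_abs.2 (Or.inr (by linarith [ht.2]))

section

variable {n : ℕ} {x C : Fin n → ℝ} {j : Fin n}

theorem continuous_fj : Continuous (fj n x C j) := by
  unfold fj; fun_prop

theorem measurableSet_Ej : MeasurableSet (Ej n x C j) :=
  measurableSet_eq_fun continuous_fj.measurable
    ((Measurable.iSup fun _ => continuous_fj.measurable).max measurable_const)

theorem fmax_nonneg (t : ℝ) : 0 ≤ fmax n x C t :=
  le_max_right _ _

theorem Ej_subset_closedBall : Ej n x C j ⊆ closedBall (x j) √(C j) := by
  intro t ht
  have h0 : 0 ≤ fj n x C j t := (fmax_nonneg t).trans_eq ht.symm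
  rw [mem_closedBall, Real.dist_eq]
  exact Real.abs_le_sqrt (by unfold fj at h0; linarith)

theorem integrableOn_fmax_Ej : IntegrableOn (fmax n x C) (Ej n x C j) :=
  ((continuous_fj.continuousOn.integrableOn_compact (isCompact_closedBall _ _)).mono_set
    Ej_subset_closedBall).congr_fun (fun _ ht => ht) measurableSet_Ej

theorem mem_Ej_of_forall_abs_sub_le {t : ℝ} (hC : ∀ i, C i ≤ C j)
    (ht : ∀ i, |t - x j| ≤ |t - x i|) (h0 : (t - x j) ^ 2 ≤ C j) : t ∈ Ej n x C j := by
  have : Nonempty (Fin n) := ⟨j⟩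
  have hle : ∀ i, fj n x C i t ≤ fj n x C j t := fun i => by
    unfold fj; linarith [hC i, sq_le_sq.2 (ht i)]
  have hsup : ⨆ i, fj n x C i t = fj n x C j t :=
    le_antisymm (ciSup_le hle) (le_ciSup (finite_range fun i => fj n x C i t).bddAbove j)
  show fj n x C j t = max (⨆ i, fj n x C i t) 0
  rw [hsup, max_eq_left (by unfold fj; linarith)]

theorem mul_le_Fj_of_Icc_subset_Ej {r : ℝ} (hr : 0 ≤ r)
    (hsub : Icc (x j) (x j + r) ⊆ Ej n x C j) : (C j - r ^ 2) * r ≤ Fj n x C j := by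
  rw [Fj, if_pos ⟨x j, hsub ⟨le_rfl, by linarith⟩⟩]
  have hlow : ∀ t ∈ Icc (x j) (x j + r), C j - r ^ 2 ≤ fmax n x C t := fun t ht => by
    rw [← hsub ht]
    unfold fj
    nlinarith [ht.1, ht.2]
  calc (C j - r ^ 2) * r = (C j - r ^ 2) * volume.real (Icc (x j) (x j + r)) := by
        simp [measureReal_def, hr]
    _ ≤ ∫ t in Icc (x j) (x j + r), fmax n x C t :=
        setIntegral_ge_of_const_le_real measurableSet_Icc (by simp) hlow
          (integrableOn_fmax_Ej.mono_set hsub)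
    _ ≤ ∫ t in Ej n x C j, fmax n x C t :=
        setIntegral_mono_set integrableOn_fmax_Ej (ae_of_all _ fmax_nonneg) (ae_of_all _ hsub)

end

theorem stmt_14_general (n : ℕ) (x : Fin n → ℝ) (hx : StrictMono x) :
    ∃ δ ∈ Set.Ioo (0 : ℝ) 1, ∃ M : ℝ, 0 < M ∧
      ∀ C : Fin n → ℝ, ∀ j : Fin n, (∀ i, C i ≤ C j) → M ≤ C j →
        δ * C j ≤ Fj n x C j := by
  obtain ⟨ε, hε, hgap⟩ := hx.exists_pos_add_le
  set r := min 1 (ε / 2)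
  have hr : 0 < r := by positivity
  have hr1 : r ≤ 1 := min_le_left _ _
  have hrε : r ≤ ε / 2 := min_le_right _ _
  refine ⟨r / 2, ⟨by positivity, by linarith⟩, 2, two_pos, fun C j hC hM => ?_⟩
  have hsub : Icc (x j) (x j + r) ⊆ Ej n x C j := fun t ht => by
    refine mem_Ej_of_forall_abs_sub_le hC (fun i => abs_sub_le_abs_sub_of_mem_Icc ht ?_) ?_
    · rcases le_or_gt i j with hij | hij
      · exact Or.inl (hx.monotone hij)
      · exact Or.inr (by linarith [hgap j i hij])
    · nlinarith [ht.1, ht.2]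
  nlinarith [mul_le_Fj_of_Icc_subset_Ej hr.le hsub]

/-- There exist `δ ∈ (0,1)` and `M > 0` such that whenever
`C_j = max{C_1, …, C_n} ≥ M`, one has `F_j(C) ≥ δ C_j`. -/
theorem stmt_14 (n : ℕ) (hn : 1 ≤ n) (x : Fin n → ℝ) (hx : StrictMono x) :
    ∃ δ ∈ Set.Ioo (0 : ℝ) 1, ∃ M : ℝ, 0 < M ∧
      ∀ C : Fin n → ℝ, ∀ j : Fin n, (∀ i, C i ≤ C j) → M ≤ C j →
        δ * C j ≤ Fj n x C j :=
  stmt_14_general n x hx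
end
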